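/- Let A ∈ ℝ^{n×m}, let B = A(:,J) have full column rank ℓ, let I be a row index set of size ℓ such that C₁ = B(I,:) is invertible, and let C₂ = B(I^c,:) be the remaining rows of B. Let R = A(I,:). Then ‖A − A R† R‖ ≤ √(1 + ‖C₂C₁^{-1}‖²) · ‖A − BB†A‖ in the spectral norm. -/

import Mathlib

open Matrix

noncomputable def specNorm {m n : Type*} [Fintype m] [Fintype n] [DecidableEq n]
    (A : Matrix m n ℝ) : ℝ :=
  ‖LinearMap.toContinuousLinearMap (Matrix.toEuclideanLin A)‖

noncomputable def sMin {m n : Type*} [Fintype m] [Fintype n] [DecidableEq n]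
    (A : Matrix m n ℝ) : ℝ :=
  Real.sqrt (⨅ i, (Matrix.isHermitian_conjTranspose_mul_self A).eigenvalues i)

noncomputable def singVals {m n : ℕ} (A : Matrix (Fin m) (Fin n) ℝ) : Fin n → ℝ :=
  fun i =>
    Real.sqrt ((Matrix.isHermitian_conjTranspose_mul_self A).eigenvalues
      (Tuple.sort (Matrix.isHermitian_conjTranspose_mul_self A).eigenvalues i.rev))

noncomputable def pinv {m n : Type*} [Fintype m] [Fintype n] (A : Matrix m n ℝ) : Matrix n m ℝ :=
  open Classical in
  if h : ∃ B : Matrix n m ℝ,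
      A * B * A = A ∧ B * A * B = B ∧ (A * B)ᵀ = A * B ∧ (B * A)ᵀ = B * A
  then h.choose else 0

/-!
Write `C₁ = B(I,:)`, `R = A(I,:)` and `E = A - BB†A`. Since `B C₁⁻¹ R` lies in the row space of `R`
and `1 - R†R` is an orthogonal projection annihilating that row space,
`A - AR†R = (A - B C₁⁻¹ R)(1 - R†R)`, so `‖A - AR†R‖ ≤ ‖A - B C₁⁻¹ R‖`. The map
`X ↦ X - B C₁⁻¹ X(I,:)` kills `B`, hence `A - B C₁⁻¹ R = E - B C₁⁻¹ E(I,:)`. This matrix vanishes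
on the rows `I` and equals `E(Iᶜ,:) - C₂C₁⁻¹ E(I,:)` on the rows `Iᶜ`; applied to a vector `v`,
with `u = E(I,:) v` and `z = E(Iᶜ,:) v`, its norm is at most
`‖z‖ + ‖C₂C₁⁻¹‖ ‖u‖ ≤ √(1 + ‖C₂C₁⁻¹‖²) √(‖u‖² + ‖z‖²) = √(1 + ‖C₂C₁⁻¹‖²) ‖E v‖` by Cauchy–Schwarz.
-/

open scoped Matrix.Norms.L2Operator
open WithLp

namespace Matrix

variable {m n k p q : Type*}

lemma specNorm_eq_l2_opNorm [Fintype m] [Fintype n] [DecidableEq n] (A : Matrix m n ℝ) :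
    specNorm A = ‖A‖ :=
  rfl

lemma transpose_eq_star (A : Matrix n n ℝ) : Aᵀ = star A := by
  rw [star_eq_conjTranspose, conjTranspose_eq_transpose_of_trivial]

section Pseudoinverse

variable [Fintype m] [Fintype n] [DecidableEq n]

-- The spectrum of a matrix is finite, hence discrete.
lemma continuousOn_spectrum (f : ℝ → ℝ) (M : Matrix n n ℝ) : ContinuousOn f (spectrum ℝ M) := by
  rw [continuousOn_iff_continuous_domRestrict]
  fun_prop

lemma mul_cfc_inv_mul_self {M : Matrix n n ℝ} (hM : IsSelfAdjoint M) :
    M * cfc (·⁻¹ : ℝ → ℝ) M * M = M := by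
  have hc := continuousOn_spectrum (n := n)
  calc M * cfc (·⁻¹ : ℝ → ℝ) M * M = cfc (fun x : ℝ => x * x⁻¹ * x) M := by
        rw [cfc_mul _ _ M (hc _ _) (hc _ _), cfc_mul _ _ M (hc _ _) (hc _ _), cfc_id' ℝ M]
    _ = cfc (fun x : ℝ => x) M := cfc_congr fun x _ => mul_inv_mul_cancel x
    _ = M := cfc_id' ℝ M

lemma cfc_inv_mul_mul_cfc_inv {M : Matrix n n ℝ} (hM : IsSelfAdjoint M) :
    cfc (·⁻¹ : ℝ → ℝ) M * M * cfc (·⁻¹ : ℝ → ℝ) M = cfc (·⁻¹ : ℝ → ℝ) M := by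
  have hc := continuousOn_spectrum (n := n)
  calc cfc (·⁻¹ : ℝ → ℝ) M * M * cfc (·⁻¹ : ℝ → ℝ) M
        = cfc (fun x : ℝ => x⁻¹ * x * x⁻¹) M := by
        rw [cfc_mul _ _ M (hc _ _) (hc _ _), cfc_mul _ _ M (hc _ _) (hc _ _), cfc_id' ℝ M]
    _ = cfc (·⁻¹ : ℝ → ℝ) M := cfc_congr fun x _ => by simpa using mul_inv_mul_cancel x⁻¹

/-- The witness is `(AᵀA)⁺ Aᵀ`, where `(AᵀA)⁺ = cfc (·⁻¹) (AᵀA)` inverts the nonzero eigenvalues. -/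
lemma exists_penrose_inverse (A : Matrix m n ℝ) :
    ∃ X : Matrix n m ℝ,
      A * X * A = A ∧ X * A * X = X ∧ (A * X)ᵀ = A * X ∧ (X * A)ᵀ = X * A := by
  set M := Aᵀ * A
  have hM : IsSelfAdjoint M := by
    have h : IsSelfAdjoint (Aᴴ * A) := isHermitian_conjTranspose_mul_self A
    rwa [conjTranspose_eq_transpose_of_trivial] at h
  have hMt : Mᵀ = M := by simp only [M, transpose_mul, transpose_transpose]
  set Y := cfc (·⁻¹ : ℝ → ℝ) M
  have hY : Yᵀ = Y := by
    rw [transpose_eq_star]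
    exact (cfc_predicate (·⁻¹ : ℝ → ℝ) M : IsSelfAdjoint Y)
  have hYM : Commute Y M := by
    have h := cfc_commute_cfc (·⁻¹ : ℝ → ℝ) (fun x => x) M
    rwa [cfc_id' ℝ M] at h
  have hA : A * (Y * M) = A := by
    have hMN : M * (1 - Y * M) = 0 := by
      rw [Matrix.mul_sub, Matrix.mul_one, ← Matrix.mul_assoc, mul_cfc_inv_mul_self hM, sub_self]
    -- `Nᵀ (AᵀA) N = 0` forces `A N = 0`
    have hN : (A * (1 - Y * M))ᴴ * (A * (1 - Y * M)) = 0 := by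
      rw [conjTranspose_eq_transpose_of_trivial, transpose_mul, Matrix.mul_assoc,
        ← Matrix.mul_assoc Aᵀ, hMN, Matrix.mul_zero]
    have h := conjTranspose_mul_self_eq_zero.mp hN
    rwa [Matrix.mul_sub, Matrix.mul_one, sub_eq_zero, eq_comm] at h
  refine ⟨Y * Aᵀ, by simpa only [M, Matrix.mul_assoc] using hA, ?_, ?_, ?_⟩
  · calc Y * Aᵀ * A * (Y * Aᵀ) = Y * M * Y * Aᵀ := by simp only [M, Matrix.mul_assoc]
      _ = Y * Aᵀ := by rw [cfc_inv_mul_mul_cfc_inv hM]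
  · simp only [transpose_mul, transpose_transpose, hY, Matrix.mul_assoc]
  · rw [Matrix.mul_assoc, transpose_mul, hMt, hY, hYM.eq]

lemma pinv_spec (A : Matrix m n ℝ) :
    A * pinv A * A = A ∧ pinv A * A * pinv A = pinv A ∧
      (A * pinv A)ᵀ = A * pinv A ∧ (pinv A * A)ᵀ = pinv A * A := by
  have h := exists_penrose_inverse A
  rw [pinv, dif_pos h]
  exact h.choose_spec

lemma mul_pinv_mul_self (A : Matrix m n ℝ) : A * pinv A * A = A :=
  (pinv_spec A).1

lemma isStarProjection_pinv_mul_self (A : Matrix m n ℝ) : IsStarProjection (pinv A * A) where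
  isIdempotentElem := by
    rw [IsIdempotentElem, ← Matrix.mul_assoc, (pinv_spec A).2.1]
  isSelfAdjoint := by
    rw [IsSelfAdjoint, ← transpose_eq_star]; exact (pinv_spec A).2.2.2

end Pseudoinverse

section Norms

variable [Fintype m] [Fintype n] [DecidableEq n] [Fintype k]

lemma l2_opNorm_mul_one_sub_le (F : Matrix m n ℝ) {P : Matrix n n ℝ} (hP : IsStarProjection P) :
    ‖F * (1 - P)‖ ≤ ‖F‖ :=
  (l2_opNorm_mul F (1 - P)).trans (mul_le_of_le_one_right (norm_nonneg F) (hP.one_sub.norm_le _))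

lemma norm_toLp_mulVec_le (A : Matrix m n ℝ) (v : n → ℝ) :
    ‖toLp 2 (A *ᵥ v)‖ ≤ ‖A‖ * ‖toLp 2 v‖ :=
  l2_opNorm_mulVec A (toLp 2 v)

lemma l2_opNorm_le_mul_of_mulVec_le {F : Matrix m n ℝ} {E : Matrix k n ℝ} {c : ℝ} (hc : 0 ≤ c)
    (h : ∀ v, ‖toLp 2 (F *ᵥ v)‖ ≤ c * ‖toLp 2 (E *ᵥ v)‖) : ‖F‖ ≤ c * ‖E‖ := by
  rw [l2_opNorm_def]
  refine ContinuousLinearMap.opNorm_le_bound _ (by positivity) fun x => ?_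
  calc ‖toLp 2 (F *ᵥ ofLp x)‖ ≤ c * ‖toLp 2 (E *ᵥ ofLp x)‖ := h _
    _ ≤ c * (‖E‖ * ‖x‖) := mul_le_mul_of_nonneg_left (norm_toLp_mulVec_le E _) hc
    _ = c * ‖E‖ * ‖x‖ := (mul_assoc _ _ _).symm

end Norms

section RowPartition

variable [Fintype n] [Fintype p] [Fintype q] {I : p → n} {Ic : q → n}

lemma norm_toLp_sq_eq_of_bijective (hI : Function.Bijective (Sum.elim I Ic)) (x : n → ℝ) :
    ‖toLp 2 x‖ ^ 2 = ‖toLp 2 (x ∘ I)‖ ^ 2 + ‖toLp 2 (x ∘ Ic)‖ ^ 2 := by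
  simp only [EuclideanSpace.norm_sq_eq, ← hI.sum_comp (fun i => ‖x i‖ ^ 2), Fintype.sum_sum_type,
    Sum.elim_inl, Sum.elim_inr, Function.comp_apply]

lemma add_mul_le_sqrt_one_add_sq_mul_sqrt (a b γ : ℝ) :
    b + γ * a ≤ √(1 + γ ^ 2) * √(a ^ 2 + b ^ 2) := by
  rw [← Real.sqrt_mul (by positivity)]
  exact (le_abs_self _).trans (Real.abs_le_sqrt (by nlinarith [sq_nonneg (a - γ * b)]))

variable [DecidableEq p]

lemma norm_toLp_le_of_comp_eq (hI : Function.Bijective (Sum.elim I Ic)) (T : Matrix q p ℝ)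
    {x y : n → ℝ} (hyI : y ∘ I = 0) (hyIc : y ∘ Ic = x ∘ Ic - T *ᵥ (x ∘ I)) :
    ‖toLp 2 y‖ ≤ √(1 + ‖T‖ ^ 2) * ‖toLp 2 x‖ := by
  have hy : ‖toLp 2 y‖ = ‖toLp 2 (y ∘ Ic)‖ := by
    have h := norm_toLp_sq_eq_of_bijective hI y
    rw [hyI, toLp_zero, norm_zero, zero_pow two_ne_zero, zero_add] at h
    exact (pow_left_inj₀ (norm_nonneg _) (norm_nonneg _) two_ne_zero).mp h
  have hx : ‖toLp 2 x‖ = √(‖toLp 2 (x ∘ I)‖ ^ 2 + ‖toLp 2 (x ∘ Ic)‖ ^ 2) := by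
    rw [← norm_toLp_sq_eq_of_bijective hI, Real.sqrt_sq (norm_nonneg _)]
  calc ‖toLp 2 y‖ = ‖toLp 2 (x ∘ Ic) - toLp 2 (T *ᵥ (x ∘ I))‖ := by
        rw [hy, hyIc, toLp_sub]
    _ ≤ ‖toLp 2 (x ∘ Ic)‖ + ‖toLp 2 (T *ᵥ (x ∘ I))‖ := norm_sub_le _ _
    _ ≤ ‖toLp 2 (x ∘ Ic)‖ + ‖T‖ * ‖toLp 2 (x ∘ I)‖ := by
        gcongr
        exact norm_toLp_mulVec_le T _
    _ ≤ √(1 + ‖T‖ ^ 2) * ‖toLp 2 x‖ := by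
        rw [hx]; exact add_mul_le_sqrt_one_add_sq_mul_sqrt _ _ _

variable [Fintype m] [DecidableEq m]

lemma l2_opNorm_le_of_submatrix_eq (hI : Function.Bijective (Sum.elim I Ic)) (T : Matrix q p ℝ)
    {E F : Matrix n m ℝ} (hFI : F.submatrix I id = 0)
    (hFIc : F.submatrix Ic id = E.submatrix Ic id - T * E.submatrix I id) :
    ‖F‖ ≤ √(1 + ‖T‖ ^ 2) * ‖E‖ := by
  refine l2_opNorm_le_mul_of_mulVec_le (by positivity) fun v => norm_toLp_le_of_comp_eq hI T ?_ ?_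
  · change F.submatrix I id *ᵥ v = 0
    rw [hFI, zero_mulVec]
  · change F.submatrix Ic id *ᵥ v = E.submatrix Ic id *ᵥ v - T *ᵥ (E.submatrix I id *ᵥ v)
    rw [hFIc, sub_mulVec, mulVec_mulVec]

end RowPartition

section Interpolation

variable [Fintype k] [DecidableEq k] {I : k → n} (B : Matrix n k ℝ)

lemma submatrix_sub_interpolate_eq_zero (hB : IsUnit (B.submatrix I id)) (E : Matrix n m ℝ) :
    (E - B * (B.submatrix I id)⁻¹ * E.submatrix I id).submatrix I id = 0 := by
  change E.submatrix I id - B.submatrix I id * (B.submatrix I id)⁻¹ * E.submatrix I id = 0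
  rw [mul_nonsing_inv _ ((isUnit_iff_isUnit_det _).mp hB), Matrix.one_mul, sub_self]

/-- Interpolating the rows `I` through the columns of `B` annihilates `B`, so the residual of `A`
equals the residual of `A - B * G` for every `G`. -/
lemma sub_interpolate_eq_of_sub_mul (hB : IsUnit (B.submatrix I id)) (A : Matrix n m ℝ)
    (G : Matrix k m ℝ) :
    A - B * (B.submatrix I id)⁻¹ * A.submatrix I id =
      (A - B * G) - B * (B.submatrix I id)⁻¹ * (A - B * G).submatrix I id := by
  have hG : (A - B * G).submatrix I id = A.submatrix I id - B.submatrix I id * G := rfl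
  have hBG : B * (B.submatrix I id)⁻¹ * (B.submatrix I id * G) = B * G := by
    rw [Matrix.mul_assoc, ← Matrix.mul_assoc _ (B.submatrix I id),
      nonsing_inv_mul _ ((isUnit_iff_isUnit_det _).mp hB), Matrix.one_mul]
  rw [hG, Matrix.mul_sub, hBG]
  abel

variable [Fintype n] [Fintype q] [Fintype m] [DecidableEq m] {Ic : q → n}

theorem l2_opNorm_sub_interpolate_le (hI : Function.Bijective (Sum.elim I Ic))
    (hB : IsUnit (B.submatrix I id)) (E : Matrix n m ℝ) :
    ‖E - B * (B.submatrix I id)⁻¹ * E.submatrix I id‖ ≤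
      √(1 + ‖B.submatrix Ic id * (B.submatrix I id)⁻¹‖ ^ 2) * ‖E‖ :=
  l2_opNorm_le_of_submatrix_eq hI _ (submatrix_sub_interpolate_eq_zero B hB E) rfl

end Interpolation

lemma sub_mul_pinv_mul_eq [Fintype m] [Fintype k] [DecidableEq m]
    (A : Matrix n m ℝ) (X : Matrix n k ℝ) (R : Matrix k m ℝ) :
    A - A * pinv R * R = (A - X * R) * (1 - pinv R * R) := by
  have hR : X * R * (pinv R * R) = X * R := by
    rw [Matrix.mul_assoc, ← Matrix.mul_assoc R, mul_pinv_mul_self]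
  rw [Matrix.sub_mul, Matrix.mul_sub, Matrix.mul_sub, Matrix.mul_one, Matrix.mul_one, hR,
    Matrix.mul_assoc A]
  abel

end Matrix

open Matrix in
theorem dong_row_selection_bound_general {n m l : ℕ} (A : Matrix (Fin n) (Fin m) ℝ)
    (J : Fin l ↪ Fin m)
    (I : Fin l → Fin n) (Ic : Fin (n - l) → Fin n)
    (hpart : Function.Bijective (Sum.elim I Ic))
    (hC1 : IsUnit ((A.submatrix id J).submatrix I id)) :
    specNorm (A - A * pinv (A.submatrix I id) * A.submatrix I id) ≤
      Real.sqrt (1 + specNorm ((A.submatrix id J).submatrix Ic id *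
          ((A.submatrix id J).submatrix I id)⁻¹) ^ 2) *
        specNorm (A - A.submatrix id J * pinv (A.submatrix id J) * A) := by
  set B := A.submatrix id J
  set C := B.submatrix I id
  set R := A.submatrix I id
  set E := A - B * pinv B * A
  simp only [specNorm_eq_l2_opNorm]
  calc ‖A - A * pinv R * R‖ = ‖(A - B * C⁻¹ * R) * (1 - pinv R * R)‖ := by
        rw [sub_mul_pinv_mul_eq]
    _ ≤ ‖A - B * C⁻¹ * R‖ := l2_opNorm_mul_one_sub_le _ (isStarProjection_pinv_mul_self R)
    _ = ‖E - B * C⁻¹ * E.submatrix I id‖ := by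
        rw [sub_interpolate_eq_of_sub_mul B hC1 A (pinv B * A), ← Matrix.mul_assoc B]
    _ ≤ _ := l2_opNorm_sub_interpolate_le B hpart hC1 E

theorem dong_row_selection_bound {n m l : ℕ} (A : Matrix (Fin n) (Fin m) ℝ)
    (J : Fin l ↪ Fin m) (hB : (A.submatrix id J).rank = l)
    (I : Fin l → Fin n) (Ic : Fin (n - l) → Fin n)
    (hpart : Function.Bijective (Sum.elim I Ic))
    (hC1 : IsUnit ((A.submatrix id J).submatrix I id)) :
    specNorm (A - A * pinv (A.submatrix I id) * A.submatrix I id) ≤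
      Real.sqrt (1 + specNorm ((A.submatrix id J).submatrix Ic id *
          ((A.submatrix id J).submatrix I id)⁻¹) ^ 2) *
        specNorm (A - A.submatrix id J * pinv (A.submatrix id J) * A) :=
  dong_row_selection_bound_general A J I Ic hpart hC1
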